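/- arXiv:1512.09035 — 2 statements merged into one kernel-verified Lean document; each statement's English description precedes it below -/
import Mathlib

section
/- Let p be the step distribution of an irreducible random walk on ℤ^d with finite support V. There exist constants η ≥ 1 and C > 0 such that for all δ ∈ M and all v ∈ V, e^{⟨s(δ), v⟩} / κ(s(δ)) ≥ C · dist(δ, ∂M)^η. -/
/- Framework for random walks on the integer lattice ℤ^d. -/

noncomputable section

namespace RWalk

/-- `ℝ^d` with the Euclidean norm. -/
abbrev E (d : ℕ) : Type := EuclideanSpace ℝ (Fin d)

/-- The embedding of `ℤ^d` into `ℝ^d`. -/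
def emb {d : ℕ} (x : Fin d → ℤ) : E d := WithLp.toLp 2 (fun i => (x i : ℝ))

/-- The bilinear pairing `⟨x, y⟩ = ∑ i, x i * y i` on `ℝ^d`. -/
def pairR {d : ℕ} (x y : E d) : ℝ := ∑ i, x i * y i

/-- The ℓ¹-norm on `ℝ^d`. -/
def l1 {d : ℕ} (x : E d) : ℝ := ∑ i, |x i|

/-- The `n`-step transition function of the walk with step distribution `p`:
`tfun p 0 = δ₀`, hence `tfun p 1 = p` and
`tfun p (n+1) x = ∑ y, tfun p n y * p (x - y)`. -/
def tfun {d : ℕ} (p : (Fin d → ℤ) → ℝ) : ℕ → (Fin d → ℤ) → ℝ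
  | 0, x => if x = 0 then 1 else 0
  | n + 1, x => ∑ᶠ y : Fin d → ℤ, tfun p n y * p (x - y)

/-- `κ(x) = ∑_{v ∈ V} p(v) e^{⟨x,v⟩}`. -/
def kappa {d : ℕ} (p : (Fin d → ℤ) → ℝ) (x : E d) : ℝ :=
  ∑ᶠ v : Fin d → ℤ, p v * Real.exp (pairR x (emb v))

/-- `log κ`. -/
def logKappa {d : ℕ} (p : (Fin d → ℤ) → ℝ) : E d → ℝ := fun x => Real.log (kappa p x)

/-- `φ(δ) = sup_{x ∈ ℝ^d} (⟨x,δ⟩ - log κ(x))`. -/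
def phi {d : ℕ} (p : (Fin d → ℤ) → ℝ) (δ : E d) : ℝ :=
  sSup (Set.range fun x : E d => pairR x δ - logKappa p x)

/-- `M`, the interior of the convex hull of the support `V` of `p`. -/
def Mset {d : ℕ} (p : (Fin d → ℤ) → ℝ) : Set (E d) :=
  interior (convexHull ℝ (emb '' Function.support p))

/-- The Hessian matrix of `f` at `x`. -/
def hessMat {d : ℕ} (f : E d → ℝ) (x : E d) : Matrix (Fin d) (Fin d) ℝ :=
  fun i j => fderiv ℝ (fun y => fderiv ℝ f y (EuclideanSpace.single j 1)) x
      (EuclideanSpace.single i 1)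

/-- The quadratic form `u ↦ uᵀ A u` of a matrix `A`. -/
def quadForm {d : ℕ} (A : Matrix (Fin d) (Fin d) ℝ) (u : E d) : ℝ :=
  ∑ i, ∑ j, u i * A i j * u j

/-- The second directional derivative `D_u² f(x)`. -/
def D2 {d : ℕ} (f : E d → ℝ) (x u : E d) : ℝ :=
  iteratedDeriv 2 (fun t : ℝ => f (x + t • u)) 0

/-- Irreducibility: for every `x ∈ ℤ^d` there is `n ∈ ℕ` with `p(n; x) > 0`. -/
def Irred {d : ℕ} (p : (Fin d → ℤ) → ℝ) : Prop :=
  ∀ x : Fin d → ℤ, ∃ n : ℕ, 0 < n ∧ 0 < tfun p n x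

/-- The step distribution of the simple random walk on `ℤ^d`. -/
def srw (d : ℕ) (v : Fin d → ℤ) : ℝ :=
  if (∑ i, (v i).natAbs) = 1 then (2 * (d : ℝ))⁻¹ else 0

end RWalk

/-!
Write `δ = ∇ log κ(s)` as the barycentre of `V` under the tilted weights `p(u) e^{⟨s,u⟩}` and let
`H = max_V ⟨s,·⟩ - min_V ⟨s,·⟩`. On the one hand `e^{⟨s,v⟩} / κ(s) ≥ e^{-H}`. On the other hand,
let `R` bound the diameter of `V` and let `ε` be such that every subset of `V` whose hull meets `M`
has a point of its hull at distance at least `ε` from `∂M`. With `τ = εH / (4R)`, all but a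
fraction `e^{-τ} / min p` of the tilted mass sits on the set `S` of vertices with
`⟨s,u⟩ ≥ max_V ⟨s,·⟩ - τ`. Since `H ≤ R‖s‖`, for `s ≠ 0` the functional `⟨s,·⟩` comes within
`τ < ε‖s‖/2` of its maximum over `M` on `conv S`, so no `ε`-ball around a point of `conv S` fits
in `M` and `conv S` misses `M`. Hence the barycentre of `S` lies on `∂M`, and
`dist(δ, ∂M) ≤ (R / min p) e^{-εH/(4R)}`. Comparing the two bounds gives the claim with
`η = max 1 (4R/ε)`.
-/

open Real Metric Finset

theorem exists_pos_forall_ball_subset_of_inter_nonempty {X ι : Type*} [PseudoMetricSpace X]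
    {U : Set X} (hU : IsOpen U) (T : Finset ι) (A : ι → Set X)
    (hA : ∀ i ∈ T, (A i ∩ U).Nonempty) : ∃ ε > 0, ∀ i ∈ T, ∃ x ∈ A i, ball x ε ⊆ U := by
  classical
  induction T using Finset.induction_on with
  | empty => exact ⟨1, one_pos, by simp⟩
  | insert i T _ ih =>
    obtain ⟨ε, hε, hT⟩ := ih fun j hj => hA j (mem_insert_of_mem hj)
    obtain ⟨x, hxA, hxU⟩ := hA i (mem_insert_self i T)
    obtain ⟨ε', hε', hball⟩ := Metric.isOpen_iff.mp hU x hxU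
    refine ⟨min ε ε', lt_min hε hε', fun j hj => ?_⟩
    rcases mem_insert.mp hj with rfl | hj
    · exact ⟨x, hxA, (ball_subset_ball (min_le_right _ _)).trans hball⟩
    · obtain ⟨y, hyA, hy⟩ := hT j hj
      exact ⟨y, hyA, (ball_subset_ball (min_le_left _ _)).trans hy⟩

theorem exists_pos_forall_dist_le_of_isBounded {X : Type*} [PseudoMetricSpace X] {A : Set X}
    (hA : Bornology.IsBounded A) : ∃ R > 0, ∀ x ∈ A, ∀ y ∈ A, dist x y ≤ R := by
  obtain ⟨R, hR⟩ := isBounded_iff.mp hA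
  exact ⟨max R 1, lt_max_of_lt_right one_pos, fun x hx y hy => (hR hx hy).trans (le_max_left _ _)⟩

section NormedSpace

variable {F : Type*} [NormedAddCommGroup F] [NormedSpace ℝ F]

theorem Convex.mem_frontier_interior {P : Set F} (hP : Convex ℝ P) (hint : (interior P).Nonempty)
    {x : F} (hx : x ∈ P) (hx' : x ∉ interior P) : x ∈ frontier (interior P) := by
  rw [isOpen_interior.frontier_eq, hP.closure_interior_eq_closure_of_nonempty_interior hint]
  exact ⟨subset_closure hx, hx'⟩

theorem infDist_frontier_interior_convexHull_le {A : Set F} (hA : A.Finite) {R : ℝ} (hR : 0 ≤ R)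
    (hAR : ∀ x ∈ A, ∀ y ∈ A, dist x y ≤ R) {x : F} (hx : x ∈ convexHull ℝ A) :
    infDist x (frontier (interior (convexHull ℝ A))) ≤ R := by
  rcases (frontier (interior (convexHull ℝ A))).eq_empty_or_nonempty with h | ⟨y, hy⟩
  · rw [h, infDist_empty]; exact hR
  have hyA : y ∈ convexHull ℝ A :=
    (hA.isClosed_convexHull ℝ).closure_subset_iff.mpr interior_subset
      (frontier_subset_closure hy)
  obtain ⟨x', hx', y', hy', hxy⟩ := convexHull_exists_dist_ge2 hx hyA
  exact (infDist_le_dist_of_mem hy).trans (hxy.trans (hAR x' hx' y' hy'))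

theorem sum_smul_sub_centerMass_eq_zero {ι : Type*} {S : Finset ι} {w : ι → ℝ} (z : ι → F)
    (hw : ∑ i ∈ S, w i ≠ 0) : ∑ i ∈ S, w i • (z i - S.centerMass w z) = 0 := by
  simp only [smul_sub, sum_sub_distrib, ← sum_smul, centerMass, smul_inv_smul₀ hw, sub_self]

theorem dist_centerMass_centerMass_le {ι : Type*} [DecidableEq ι] {t S : Finset ι} (hS : S ⊆ t)
    {w : ι → ℝ} (hw : ∀ i ∈ t, 0 ≤ w i) (hwS : 0 < ∑ i ∈ S, w i) {z : ι → F} {R : ℝ}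
    (hR : ∀ i ∈ t, ∀ j ∈ t, dist (z i) (z j) ≤ R) :
    dist (t.centerMass w z) (S.centerMass w z) ≤ R * (∑ i ∈ t \ S, w i) / ∑ i ∈ t, w i := by
  set δ' := S.centerMass w z
  have hwt : 0 < ∑ i ∈ t, w i :=
    hwS.trans_le (sum_le_sum_of_subset_of_nonneg hS fun i hi _ => hw i hi)
  have hδ' : δ' ∈ convexHull ℝ (z '' t) :=
    S.centerMass_mem_convexHull (fun i hi => hw i (hS hi)) hwS
      fun i hi => Set.mem_image_of_mem z (hS hi)
  have hzδ' : ∀ i ∈ t, ‖z i - δ'‖ ≤ R := fun i hi => by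
    obtain ⟨_, ⟨j, hj, rfl⟩, h⟩ := convexHull_exists_dist_ge hδ' (z i)
    rw [← dist_eq_norm, dist_comm]
    exact h.trans (hR j hj i hi)
  have hsplit : t.centerMass w z - δ' = (∑ i ∈ t, w i)⁻¹ • ∑ i ∈ t \ S, w i • (z i - δ') :=
    calc t.centerMass w z - δ' = (∑ i ∈ t, w i)⁻¹ • ∑ i ∈ t, w i • (z i - δ') := by
          simp only [centerMass, smul_sub, sum_sub_distrib, ← sum_smul, inv_smul_smul₀ hwt.ne']
      _ = (∑ i ∈ t, w i)⁻¹ • ∑ i ∈ t \ S, w i • (z i - δ') := by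
          rw [← sum_sdiff hS (f := fun i => w i • (z i - δ')),
            sum_smul_sub_centerMass_eq_zero z hwS.ne', add_zero]
  rw [dist_eq_norm, hsplit, norm_smul, norm_inv, Real.norm_of_nonneg hwt.le, inv_mul_eq_div,
    mul_comm R, div_le_div_iff_of_pos_right hwt]
  calc ‖∑ i ∈ t \ S, w i • (z i - δ')‖ ≤ ∑ i ∈ t \ S, w i * R := by
        refine (norm_sum_le _ _).trans (sum_le_sum fun i hi => ?_)
        have hi := (mem_sdiff.mp hi).1
        rw [norm_smul, Real.norm_of_nonneg (hw i hi)]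
        exact mul_le_mul_of_nonneg_left (hzδ' i hi) (hw i hi)
    _ = (∑ i ∈ t \ S, w i) * R := (sum_mul ..).symm

theorem infDist_centerMass_frontier_le {ι : Type*} [DecidableEq ι] {t S : Finset ι} (hS : S ⊆ t)
    {w : ι → ℝ} (hw : ∀ i ∈ t, 0 ≤ w i) (hwS : 0 < ∑ i ∈ S, w i) {z : ι → F} {R : ℝ}
    (hR : ∀ i ∈ t, ∀ j ∈ t, dist (z i) (z j) ≤ R)
    (hint : (interior (convexHull ℝ (z '' t))).Nonempty)
    (hSint : convexHull ℝ (z '' S) ∩ interior (convexHull ℝ (z '' t)) = ∅) :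
    infDist (t.centerMass w z) (frontier (interior (convexHull ℝ (z '' t)))) ≤
      R * (∑ i ∈ t \ S, w i) / ∑ i ∈ t, w i := by
  have hhull : S.centerMass w z ∈ convexHull ℝ (z '' S) :=
    S.centerMass_mem_convexHull (fun i hi => hw i (hS hi)) hwS fun i hi => Set.mem_image_of_mem z hi
  have hfrontier : S.centerMass w z ∈ frontier (interior (convexHull ℝ (z '' t))) :=
    (convex_convexHull ℝ _).mem_frontier_interior hint
      (convexHull_mono (Set.image_mono (coe_subset.mpr hS)) hhull) fun h => hSint.subset ⟨hhull, h⟩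
  exact (infDist_le_dist_of_mem hfrontier).trans (dist_centerMass_centerMass_le hS hw hwS hR)

end NormedSpace

section InnerProductSpace

variable {F : Type*} [NormedAddCommGroup F] [InnerProductSpace ℝ F]

theorem inner_add_half_mul_norm_le_of_ball_subset {x s : F} {ε m : ℝ} (hε : 0 < ε)
    (h : ball x ε ⊆ {y | inner ℝ s y ≤ m}) : inner ℝ s x + ε / 2 * ‖s‖ ≤ m := by
  rcases eq_or_ne s 0 with rfl | hs
  · simpa using h (mem_ball_self hε)
  have hy : x + (ε / 2 / ‖s‖) • s ∈ ball x ε := by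
    rw [mem_ball, dist_eq_norm, add_sub_cancel_left, norm_smul, Real.norm_of_nonneg (by positivity),
      div_mul_cancel₀ _ (norm_ne_zero_iff.mpr hs)]
    linarith
  have := h hy
  rw [Set.mem_ofPred_eq, inner_add_right, real_inner_smul_right, real_inner_self_eq_norm_sq] at this
  convert this using 2
  field_simp

theorem sup'_sub_inf'_inner_le {ι : Type*} {t : Finset ι} (ht : t.Nonempty) (s : F) {z : ι → F}
    {R : ℝ} (hR : ∀ i ∈ t, ∀ j ∈ t, dist (z i) (z j) ≤ R) :
    t.sup' ht (fun i => inner ℝ s (z i)) - t.inf' ht (fun i => inner ℝ s (z i)) ≤ ‖s‖ * R := by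
  obtain ⟨i, hi, hi'⟩ := exists_mem_eq_sup' ht fun i => inner ℝ s (z i)
  obtain ⟨j, hj, hj'⟩ := exists_mem_eq_inf' ht fun i => inner ℝ s (z i)
  rw [hi', hj', ← inner_sub_right]
  refine (real_inner_le_norm _ _).trans (mul_le_mul_of_nonneg_left ?_ (norm_nonneg s))
  exact dist_eq_norm (z i) (z j) ▸ hR i hi j hj

end InnerProductSpace

theorem exists_pos_forall_le_of_forall_pos {ι : Type*} {t : Finset ι} {g : ι → ℝ}
    (h : ∀ i ∈ t, 0 < g i) : ∃ c > 0, ∀ i ∈ t, c ≤ g i := by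
  rcases t.eq_empty_or_nonempty with rfl | ht
  · exact ⟨1, one_pos, by simp⟩
  · exact ⟨t.inf' ht g, (lt_inf'_iff ht).mpr h, fun i hi => inf'_le g hi⟩

section Gibbs

variable {ι : Type*} {t : Finset ι} {p : ι → ℝ} (f : ι → ℝ)

theorem exp_inf'_le_sum_mul_exp (hp : ∀ i ∈ t, 0 ≤ p i) (hsum : ∑ i ∈ t, p i = 1)
    (ht : t.Nonempty) : exp (t.inf' ht f) ≤ ∑ i ∈ t, p i * exp (f i) :=
  calc exp (t.inf' ht f) = ∑ i ∈ t, p i * exp (t.inf' ht f) := by rw [← sum_mul, hsum, one_mul]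
    _ ≤ ∑ i ∈ t, p i * exp (f i) := sum_le_sum fun i hi =>
        mul_le_mul_of_nonneg_left (exp_le_exp.mpr (inf'_le f hi)) (hp i hi)

theorem sum_mul_exp_le_exp_sup' (hp : ∀ i ∈ t, 0 ≤ p i) (hsum : ∑ i ∈ t, p i = 1)
    (ht : t.Nonempty) : ∑ i ∈ t, p i * exp (f i) ≤ exp (t.sup' ht f) :=
  calc ∑ i ∈ t, p i * exp (f i) ≤ ∑ i ∈ t, p i * exp (t.sup' ht f) := sum_le_sum fun i hi =>
        mul_le_mul_of_nonneg_left (exp_le_exp.mpr (le_sup' f hi)) (hp i hi)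
    _ = exp (t.sup' ht f) := by rw [← sum_mul, hsum, one_mul]

theorem exp_neg_sub_le_exp_div_sum_mul_exp (hp : ∀ i ∈ t, 0 ≤ p i) (hsum : ∑ i ∈ t, p i = 1)
    {i : ι} (hi : i ∈ t) :
    exp (-(t.sup' ⟨i, hi⟩ f - t.inf' ⟨i, hi⟩ f)) ≤ exp (f i) / ∑ j ∈ t, p j * exp (f j) := by
  rw [neg_sub, exp_sub]
  exact div_le_div₀ (exp_pos _).le (exp_le_exp.mpr (inf'_le f hi))
    ((exp_pos _).trans_le (exp_inf'_le_sum_mul_exp f hp hsum ⟨i, hi⟩))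
    (sum_mul_exp_le_exp_sup' f hp hsum _)

theorem sum_filter_lt_sup'_sub_mul_exp_le {pm : ℝ} (hpm : 0 < pm) (hp : ∀ i ∈ t, pm ≤ p i)
    (hsum : ∑ i ∈ t, p i = 1) (ht : t.Nonempty) (τ : ℝ) :
    ∑ i ∈ t with f i < t.sup' ht f - τ, p i * exp (f i) ≤
      exp (-τ) / pm * ∑ i ∈ t, p i * exp (f i) := by
  have hp0 : ∀ i ∈ t, 0 ≤ p i := fun i hi => hpm.le.trans (hp i hi)
  obtain ⟨j, hj, hjmax⟩ := exists_mem_eq_sup' ht f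
  calc ∑ i ∈ t with f i < t.sup' ht f - τ, p i * exp (f i)
      ≤ ∑ i ∈ t with f i < t.sup' ht f - τ, p i * exp (t.sup' ht f - τ) :=
        sum_le_sum fun i hi => mul_le_mul_of_nonneg_left
          (exp_le_exp.mpr (mem_filter.mp hi).2.le) (hp0 i (mem_filter.mp hi).1)
    _ ≤ ∑ i ∈ t, p i * exp (t.sup' ht f - τ) :=
        sum_le_sum_of_subset_of_nonneg (filter_subset _ _) fun i hi _ =>
          mul_nonneg (hp0 i hi) (exp_pos _).le
    _ = exp (-τ) / pm * (pm * exp (f j)) := by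
        rw [← sum_mul, hsum, hjmax, sub_eq_add_neg, exp_add]
        field_simp
    _ ≤ exp (-τ) / pm * (p j * exp (f j)) := by gcongr; exact hp j hj
    _ ≤ exp (-τ) / pm * ∑ i ∈ t, p i * exp (f i) := by
        gcongr
        exact single_le_sum (fun i hi => mul_nonneg (hp0 i hi) (exp_pos _).le) hj

end Gibbs

theorem rpow_le_exp_neg_of_le_exp_neg_mul {x c H η : ℝ} (hx : 0 ≤ x) (hc : 0 < c) (hH : 0 ≤ H)
    (hη : c⁻¹ ≤ η) (h : x ≤ exp (-(c * H))) : x ^ η ≤ exp (-H) := by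
  have hx1 : x ≤ 1 := h.trans (exp_le_one_iff.mpr (neg_nonpos.mpr (mul_nonneg hc.le hH)))
  calc x ^ η ≤ x ^ c⁻¹ := rpow_le_rpow_of_exponent_ge' hx hx1 (inv_nonneg.mpr hc.le) hη
    _ ≤ exp (-(c * H)) ^ c⁻¹ := rpow_le_rpow hx h (inv_nonneg.mpr hc.le)
    _ = exp (-H) := by rw [← exp_mul]; field_simp

namespace RWalk

section Kappa

variable {d : ℕ} {p : (Fin d → ℤ) → ℝ}

theorem pairR_eq_inner (x y : E d) : pairR x y = inner ℝ x y := by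
  simp [pairR, PiLp.inner_apply, mul_comm]

theorem kappa_eq_sum (hfin : (Function.support p).Finite) (x : E d) :
    kappa p x = ∑ v ∈ hfin.toFinset, p v * exp (inner ℝ x (emb v)) := by
  simp_rw [kappa, pairR_eq_inner]
  exact finsum_eq_sum_of_support_subset _ <| by
    simp only [Set.Finite.coe_toFinset]
    exact Function.support_mul_subset_left p fun v => exp (inner ℝ x (emb v))

theorem kappa_pos (hp : ∀ v, 0 ≤ p v) (hfin : (Function.support p).Finite)
    (hne : (Function.support p).Nonempty) (x : E d) : 0 < kappa p x := by
  obtain ⟨v, hv⟩ := hne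
  rw [kappa_eq_sum hfin]
  exact sum_pos' (fun u _ => mul_nonneg (hp u) (exp_pos _).le)
    ⟨v, hfin.mem_toFinset.mpr hv, mul_pos ((hp v).lt_of_ne' hv) (exp_pos _)⟩

theorem hasFDerivAt_kappa (hfin : (Function.support p).Finite) (s : E d) :
    HasFDerivAt (kappa p)
      (∑ v ∈ hfin.toFinset, (p v * exp (inner ℝ s (emb v))) • innerSL ℝ (emb v)) s := by
  have hκ : kappa p = fun x => ∑ v ∈ hfin.toFinset, p v * exp (innerSL ℝ (emb v) x) := by
    ext x
    simp [kappa_eq_sum hfin, real_inner_comm]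
  rw [hκ]
  refine HasFDerivAt.fun_sum fun v _ => ?_
  refine (((innerSL ℝ (emb v)).hasFDerivAt.exp).const_mul (p v)).congr_fderiv ?_
  simp [smul_smul, real_inner_comm]

theorem gradient_logKappa_eq_centerMass (hp : ∀ v, 0 ≤ p v) (hfin : (Function.support p).Finite)
    (hne : (Function.support p).Nonempty) (s : E d) :
    gradient (logKappa p) s =
      hfin.toFinset.centerMass (fun v => p v * exp (inner ℝ s (emb v))) emb := by
  have hκ := kappa_pos hp hfin hne s
  have hderiv : HasFDerivAt (logKappa p) ((kappa p s)⁻¹ •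
      ∑ v ∈ hfin.toFinset, (p v * exp (inner ℝ s (emb v))) • innerSL ℝ (emb v)) s :=
    (hasFDerivAt_kappa hfin s).log hκ.ne'
  refine HasGradientAt.gradient (hasGradientAt_iff_hasFDerivAt.mpr (hderiv.congr_fderiv ?_))
  ext y
  simp [centerMass, ← kappa_eq_sum hfin, real_inner_comm]

end Kappa

section Distance

variable {d : ℕ} {p : (Fin d → ℤ) → ℝ}

theorem exists_pos_forall_ball_subset_Mset (hfin : (Function.support p).Finite) :
    ∃ ε > 0, ∀ S ⊆ hfin.toFinset, (convexHull ℝ (emb '' ↑S) ∩ Mset p).Nonempty →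
      ∃ x ∈ convexHull ℝ (emb '' ↑S), ball x ε ⊆ Mset p := by
  classical
  obtain ⟨ε, hε, h⟩ := exists_pos_forall_ball_subset_of_inter_nonempty
    (isOpen_interior : IsOpen (Mset p))
    (hfin.toFinset.powerset.filter fun S : Finset _ => (convexHull ℝ (emb '' ↑S) ∩ Mset p).Nonempty)
    (fun S => convexHull ℝ (emb '' ↑S)) fun S hS => (mem_filter.mp hS).2
  exact ⟨ε, hε, fun S hS hSM => h S (mem_filter.mpr ⟨mem_powerset.mpr hS, hSM⟩)⟩

theorem convexHull_filter_le_inner_inter_Mset_eq_empty (hfin : (Function.support p).Finite)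
    {ε : ℝ} (hε : 0 < ε)
    (hball : ∀ S ⊆ hfin.toFinset, (convexHull ℝ (emb '' ↑S) ∩ Mset p).Nonempty →
      ∃ x ∈ convexHull ℝ (emb '' ↑S), ball x ε ⊆ Mset p)
    (s : E d) (hne : hfin.toFinset.Nonempty) {τ : ℝ} (hτ : τ < ε / 2 * ‖s‖) :
    convexHull ℝ (emb '' ↑(hfin.toFinset.filter fun u =>
      hfin.toFinset.sup' hne (fun u => inner ℝ s (emb u)) - τ ≤ inner ℝ s (emb u))) ∩
      Mset p = ∅ := by
  set m := hfin.toFinset.sup' hne fun u => inner ℝ s (emb u)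
  by_contra hS
  obtain ⟨x, hx, hxball⟩ := hball _ (filter_subset _ _) (Set.nonempty_iff_ne_empty.mpr hS)
  have hup : ball x ε ⊆ {y | inner ℝ s y ≤ m} := by
    refine hxball.trans (interior_subset.trans
      (convexHull_min ?_ (convex_halfSpace_le (innerSL ℝ s).isLinear m)))
    rintro _ ⟨u, hu, rfl⟩
    exact le_sup' (fun u => inner ℝ s (emb u)) (hfin.mem_toFinset.mpr hu)
  have hlow : m - τ ≤ inner ℝ s x := by
    refine convexHull_min ?_ (convex_halfSpace_ge (innerₗ _ s).isLinear (m - τ)) hx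
    rintro _ ⟨u, hu, rfl⟩
    exact (mem_filter.mp hu).2
  linarith [inner_add_half_mul_norm_le_of_ball_subset hε hup]

theorem infDist_centerMass_frontier_le_of_ne_zero (hp : ∀ v, 0 ≤ p v)
    (hfin : (Function.support p).Finite) (hsum : ∑ u ∈ hfin.toFinset, p u = 1) {pm R ε : ℝ}
    (hpm : 0 < pm) (hpm_le : ∀ u ∈ hfin.toFinset, pm ≤ p u) (hR : 0 < R)
    (hRdist : ∀ u ∈ hfin.toFinset, ∀ w ∈ hfin.toFinset, dist (emb u) (emb w) ≤ R) (hε : 0 < ε)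
    (hball : ∀ S ⊆ hfin.toFinset, (convexHull ℝ (emb '' ↑S) ∩ Mset p).Nonempty →
      ∃ x ∈ convexHull ℝ (emb '' ↑S), ball x ε ⊆ Mset p)
    {s : E d} (hs : s ≠ 0) (hne : hfin.toFinset.Nonempty)
    (hδ : hfin.toFinset.centerMass (fun u => p u * exp (inner ℝ s (emb u))) emb ∈ Mset p) :
    infDist (hfin.toFinset.centerMass (fun u => p u * exp (inner ℝ s (emb u))) emb)
        (frontier (Mset p)) ≤
      R / pm * exp (-(ε / (4 * R) * (hfin.toFinset.sup' hne (fun u => inner ℝ s (emb u)) -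
        hfin.toFinset.inf' hne (fun u => inner ℝ s (emb u))))) := by
  set V := hfin.toFinset
  set f : (Fin d → ℤ) → ℝ := fun u => inner ℝ s (emb u)
  set c : (Fin d → ℤ) → ℝ := fun u => p u * exp (f u)
  have hc : ∀ u ∈ V, 0 ≤ c u := fun u _ => mul_nonneg (hp u) (exp_pos _).le
  set τ := ε / (4 * R) * (V.sup' hne f - V.inf' hne f)
  set S := V.filter fun u => V.sup' hne f - τ ≤ f u
  have hτ : τ < ε / 2 * ‖s‖ := by
    have hs' := norm_pos_iff.mpr hs
    calc τ ≤ ε / (4 * R) * (‖s‖ * R) :=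
          mul_le_mul_of_nonneg_left (sup'_sub_inf'_inner_le hne s hRdist) (by positivity)
      _ < ε / 2 * ‖s‖ := by field_simp; nlinarith
  have hSM := convexHull_filter_le_inner_inter_Mset_eq_empty hfin hε hball s hne hτ
  have hcS : 0 < ∑ u ∈ S, c u := by
    obtain ⟨u, hu, hmax⟩ := exists_mem_eq_sup' hne f
    have hτ0 : 0 ≤ τ := mul_nonneg (by positivity)
      (sub_nonneg.mpr ((inf'_le f hu).trans (le_sup' f hu)))
    refine sum_pos' (fun u hu => hc u (mem_filter.mp hu).1)
      ⟨u, mem_filter.mpr ⟨hu, by linarith⟩, mul_pos (hpm.trans_le (hpm_le u hu)) (exp_pos _)⟩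
  have hcV : 0 < ∑ u ∈ V, c u :=
    hcS.trans_le (sum_le_sum_of_subset_of_nonneg (filter_subset _ _) fun u hu _ => hc u hu)
  have htail : ∑ u ∈ V \ S, c u ≤ exp (-τ) / pm * ∑ u ∈ V, c u := by
    rw [← filter_not]
    simpa only [not_le] using sum_filter_lt_sup'_sub_mul_exp_le f hpm hpm_le hsum hne τ
  have hM : Mset p = interior (convexHull ℝ (emb '' V)) := by rw [Mset, hfin.coe_toFinset]
  rw [hM] at hδ hSM ⊢
  calc infDist (V.centerMass c emb) (frontier (interior (convexHull ℝ (emb '' V))))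
      ≤ R * (∑ u ∈ V \ S, c u) / ∑ u ∈ V, c u :=
        infDist_centerMass_frontier_le (filter_subset _ _) hc hcS hRdist ⟨_, hδ⟩ hSM
    _ ≤ R * (exp (-τ) / pm * ∑ u ∈ V, c u) / ∑ u ∈ V, c u := by gcongr
    _ = R / pm * exp (-τ) := by field_simp

theorem infDist_gradient_logKappa_frontier_le (hp : ∀ v, 0 ≤ p v)
    (hfin : (Function.support p).Finite) (hsum : ∑ u ∈ hfin.toFinset, p u = 1) {pm R ε : ℝ}
    (hpm : 0 < pm) (hpm_le : ∀ u ∈ hfin.toFinset, pm ≤ p u) (hR : 0 < R)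
    (hRdist : ∀ x ∈ emb '' Function.support p, ∀ y ∈ emb '' Function.support p, dist x y ≤ R)
    (hε : 0 < ε)
    (hball : ∀ S ⊆ hfin.toFinset, (convexHull ℝ (emb '' ↑S) ∩ Mset p).Nonempty →
      ∃ x ∈ convexHull ℝ (emb '' ↑S), ball x ε ⊆ Mset p)
    (s : E d) (hne : hfin.toFinset.Nonempty) (hδ : gradient (logKappa p) s ∈ Mset p) :
    infDist (gradient (logKappa p) s) (frontier (Mset p)) ≤
      R / pm * exp (-(ε / (4 * R) * (hfin.toFinset.sup' hne (fun u => inner ℝ s (emb u)) -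
        hfin.toFinset.inf' hne (fun u => inner ℝ s (emb u))))) := by
  rw [gradient_logKappa_eq_centerMass hp hfin (by simpa using hne) s] at hδ ⊢
  rcases eq_or_ne s 0 with rfl | hs
  · have hpm1 : pm ≤ 1 := by
      obtain ⟨v, hv⟩ := hne
      exact (hpm_le v hv).trans (hsum ▸ single_le_sum (fun u _ => hp u) hv)
    simp only [inner_zero_left, exp_zero, mul_one] at hδ ⊢
    rw [sup'_const, inf'_const, sub_self, mul_zero, neg_zero, exp_zero, mul_one]
    exact (infDist_frontier_interior_convexHull_le (hfin.image emb) hR.le hRdist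
      (interior_subset hδ)).trans (le_div_self hR.le hpm hpm1)
  exact infDist_centerMass_frontier_le_of_ne_zero hp hfin hsum hpm hpm_le hR
    (fun u hu w hw =>
      hRdist _ ⟨u, hfin.mem_toFinset.mp hu, rfl⟩ _ ⟨w, hfin.mem_toFinset.mp hw, rfl⟩)
    hε hball hs hne hδ

end Distance

theorem statement3_general (d : ℕ) (p : (Fin d → ℤ) → ℝ) (hp : ∀ v, 0 ≤ p v)
    (hfin : (Function.support p).Finite) (hsum : ∑ᶠ v, p v = 1) :
    ∃ η : ℝ, 1 ≤ η ∧ ∃ C : ℝ, 0 < C ∧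
      ∀ δ ∈ Mset p, ∀ s : E d, gradient (logKappa p) s = δ →
        ∀ v ∈ Function.support p,
          C * Metric.infDist δ (frontier (Mset p)) ^ η ≤
            Real.exp (pairR s (emb v)) / kappa p s := by
  set V := hfin.toFinset
  have hV : ∑ u ∈ V, p u = 1 := (finsum_eq_sum p hfin).symm.trans hsum
  obtain ⟨pm, hpm, hpm_le⟩ := exists_pos_forall_le_of_forall_pos fun u (hu : u ∈ V) =>
    (hp u).lt_of_ne' (hfin.mem_toFinset.mp hu)
  obtain ⟨R, hR, hRdist⟩ := exists_pos_forall_dist_le_of_isBounded (hfin.image emb).isBounded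
  obtain ⟨ε, hε, hball⟩ := exists_pos_forall_ball_subset_Mset hfin
  refine ⟨max 1 (ε / (4 * R))⁻¹, le_max_left _ _, (R / pm) ^ (-max 1 (ε / (4 * R))⁻¹),
    by positivity, ?_⟩
  rintro δ hδ s rfl v hv
  have hvV : v ∈ V := hfin.mem_toFinset.mpr hv
  set f : (Fin d → ℤ) → ℝ := fun u => inner ℝ s (emb u)
  have hlow := exp_neg_sub_le_exp_div_sum_mul_exp f (fun u _ => hp u) hV hvV
  have hdist := infDist_gradient_logKappa_frontier_le hp hfin hV hpm hpm_le hR hRdist hε hball s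
    ⟨v, hvV⟩ hδ
  rw [pairR_eq_inner, kappa_eq_sum hfin, Real.rpow_neg (by positivity), ← div_eq_inv_mul,
    ← Real.div_rpow infDist_nonneg (by positivity)]
  refine (rpow_le_exp_neg_of_le_exp_neg_mul (div_nonneg infDist_nonneg (by positivity))
    (by positivity)
    (sub_nonneg.mpr ((inf'_le f hvV).trans (le_sup' f hvV))) (le_max_right _ _) ?_).trans hlow
  rwa [div_le_iff₀' (by positivity)]

/-- There are `η ≥ 1` and `C > 0` such that for all `δ ∈ M` and `v ∈ V`,
`e^{⟨s(δ),v⟩} / κ(s(δ)) ≥ C · dist(δ, ∂M)^η`. -/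
theorem statement3 (d : ℕ) (p : (Fin d → ℤ) → ℝ) (hp : ∀ v, 0 ≤ p v)
    (hfin : (Function.support p).Finite) (hsum : ∑ᶠ v, p v = 1) (hirr : Irred p) :
    ∃ η : ℝ, 1 ≤ η ∧ ∃ C : ℝ, 0 < C ∧
      ∀ δ ∈ Mset p, ∀ s : E d, gradient (logKappa p) s = δ →
        ∀ v ∈ Function.support p,
          C * Metric.infDist δ (frontier (Mset p)) ^ η ≤
            Real.exp (pairR s (emb v)) / kappa p s :=
  statement3_general d p hp hfin hsum

end RWalk
end
end

section
/- Let p be the step distribution of an irreducible random walk on ℤ^d with finite support V and period r, and let U = {θ ∈ [−π, π)^d : |κ(iθ)| = 1}. Then: (i) for every θ₀ ∈ U there is t ∈ [−π,π) with κ(iθ₀) = e^{it}, and e^{i⟨θ₀, v⟩} = e^{it} for every v ∈ V; (ii) κ(iθ₀)^r = 1 for every θ₀ ∈ U; and (iii) U has exactly r elements. -/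
/- Framework for random walks on the integer lattice ℤ^d. -/

noncomputable section

namespace RWalk

/-- The exponential polynomial `κ` extended to `ℂ^d`. -/
def kappaC {d : ℕ} (p : (Fin d → ℤ) → ℝ) (z : Fin d → ℂ) : ℂ :=
  ∑ᶠ v : Fin d → ℤ, (p v : ℂ) * Complex.exp (∑ i, z i * (v i : ℂ))

/-- `U = {θ ∈ [-π,π)^d : |κ(iθ)| = 1}`. -/
def Uset {d : ℕ} (p : (Fin d → ℤ) → ℝ) : Set (E d) :=
  {θ | (∀ i, θ i ∈ Set.Ico (-Real.pi) Real.pi) ∧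
    ‖kappaC p (fun i => (θ i : ℂ) * Complex.I)‖ = 1}

end RWalk

/-! With `χ_θ(x) = e^{i⟨θ,x⟩}`, a character of `ℤ^d`, the number `κ(iθ) = ∑_v p(v) χ_θ(v)` is a
convex combination of points of the unit circle, so by strict convexity `|κ(iθ)| = 1` forces
`χ_θ = κ(iθ)` on `V`, and then `χ_θ(x) = κ(iθ)^n` whenever the walk reaches `x` in `n` steps.
Returns to `0` give `κ(iθ)^r = 1`, and by irreducibility `κ(iθ)` determines `χ_θ`, hence `θ` in
the box `[-π, π)^d`. Conversely, irreducibility makes the number of steps needed to reach `x`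
well defined modulo `r`, which gives a homomorphism `L : ℤ^d → ℤ/r` with `L = 1` on `V`; for an
`r`-th root of unity `w` the character `x ↦ w^{L x}` is some `χ_θ`, and then `κ(iθ) = w`. Thus
`θ ↦ κ(iθ)` maps `U` bijectively onto the `r`-th roots of unity. -/

open Complex Function

lemma injOn_exp_mul_I_Ico :
    Set.InjOn (fun t : ℝ => exp (t * I)) (Set.Ico (-Real.pi) Real.pi) := by
  intro s hs u hu h
  obtain ⟨n, hn⟩ := exp_eq_exp_iff_exists_int.1 h
  have hsu : s = u + n • (2 * Real.pi) := by
    simpa [zsmul_eq_mul, mul_comm] using congrArg im hn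
  have hfix : ∀ t ∈ Set.Ico (-Real.pi) Real.pi, toIcoMod Real.two_pi_pos (-Real.pi) t = t :=
    fun t ht => (toIcoMod_eq_self _).2 ⟨ht.1, by linarith [ht.2]⟩
  rw [← hfix s hs, ← hfix u hu, hsu, toIcoMod_add_zsmul]

lemma exists_mem_Ico_exp_mul_I_eq {z : ℂ} (hz : ‖z‖ = 1) :
    ∃ t ∈ Set.Ico (-Real.pi) Real.pi, exp (t * I) = z := by
  refine ⟨toIcoMod Real.two_pi_pos (-Real.pi) (arg z), ?_, ?_⟩
  · have h := toIcoMod_mem_Ico Real.two_pi_pos (-Real.pi) (arg z)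
    exact ⟨h.1, by linarith [h.2]⟩
  · rw [eq_sub_of_add_eq (toIcoMod_add_toIcoDiv_zsmul _ _ _), ofReal_sub, ofReal_zsmul,
      ofReal_mul, ofReal_ofNat, exp_mul_I_periodic.sub_zsmul_eq]
    simpa [hz] using norm_mul_exp_arg_mul_I z

lemma eq_sum_of_norm_sum_eq {ι V : Type*} [NormedAddCommGroup V] [NormedSpace ℝ V]
    [StrictConvexSpace ℝ V] {t : Finset ι} {w : ι → ℝ} {z : ι → V} {r : ℝ}
    (h0 : ∀ i ∈ t, 0 ≤ w i) (h1 : ∑ i ∈ t, w i = 1) (hz : ∀ i ∈ t, ‖z i‖ ≤ r)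
    (h : ‖∑ i ∈ t, w i • z i‖ = r) {i : ι} (hi : i ∈ t) (hi0 : w i ≠ 0) :
    z i = ∑ k ∈ t, w k • z k := by
  have hconst : ∀ k ∈ t, w k • z k = w k • z i := by
    intro k hk
    by_cases hk0 : w k = 0
    · simp [hk0]
    · by_contra hne
      have hki : z k ≠ z i := fun e => hne (by rw [e])
      exact (norm_sum_lt_of_strictConvexSpace h0 h1 hk hi hki hk0 hi0 hz).ne h
  rw [Finset.sum_congr rfl hconst, ← Finset.sum_smul, h1, one_smul]

lemma addChar_ext_single {d : ℕ} {M : Type*} [DivisionCommMonoid M]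
    {ψ χ : AddChar (Fin d → ℤ) M} (h : ∀ j, ψ (Pi.single j (1 : ℤ)) = χ (Pi.single j 1)) :
    ψ = χ := by
  apply AddChar.toAddMonoidHomEquiv.injective
  refine AddMonoidHom.pi_ext fun j (n : ℤ) => ?_
  have hsingle : (Pi.single j n : Fin d → ℤ) = n • (Pi.single j 1 : Fin d → ℤ) := by
    rw [← Pi.single_smul, smul_eq_mul, mul_one]
  simp only [AddChar.toAddMonoidHomEquiv_apply, hsingle, AddChar.map_zsmul_eq_zpow, h j]

namespace RWalk

variable {d : ℕ} {p : (Fin d → ℤ) → ℝ}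

lemma tfun_nonneg (hp : ∀ v, 0 ≤ p v) : ∀ n x, 0 ≤ tfun p n x
  | 0, x => by simp only [tfun]; split <;> norm_num
  | n + 1, x => finsum_nonneg fun y => mul_nonneg (tfun_nonneg hp n y) (hp _)

lemma tfun_zero_pos_iff {x : Fin d → ℤ} : 0 < tfun p 0 x ↔ x = 0 := by
  rw [tfun]
  split_ifs with h <;> simp [h]

lemma tfun_one : tfun p 1 = p := by
  funext v
  rw [tfun, finsum_eq_single _ 0 fun y hy => by simp [tfun, hy]]
  simp [tfun]

lemma exists_pos_of_tfun_succ_pos (hp : ∀ v, 0 ≤ p v) {n : ℕ} {x : Fin d → ℤ}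
    (h : 0 < tfun p (n + 1) x) : ∃ y, 0 < tfun p n y ∧ 0 < p (x - y) := by
  by_contra! hc
  refine h.ne' (finsum_eq_zero_of_forall_eq_zero fun y => ?_)
  rcases (tfun_nonneg hp n y).lt_or_eq with hy | hy
  · rw [le_antisymm (hc y hy) (hp _), mul_zero]
  · rw [← hy, zero_mul]

lemma support_tfun_finite (hp : ∀ v, 0 ≤ p v) (hfin : (support p).Finite) :
    ∀ n, (support (tfun p n)).Finite
  | 0 => (Set.finite_singleton 0).subset fun x hx =>
      tfun_zero_pos_iff.1 ((tfun_nonneg hp 0 x).lt_of_ne' hx)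
  | n + 1 => ((support_tfun_finite hp hfin n).add hfin).subset fun x hx => by
      obtain ⟨y, hy, hxy⟩ := exists_pos_of_tfun_succ_pos hp ((tfun_nonneg hp _ x).lt_of_ne' hx)
      exact ⟨y, hy.ne', x - y, hxy.ne', add_sub_cancel y x⟩

lemma tfun_succ_pos (hp : ∀ v, 0 ≤ p v) (hfin : (support p).Finite) {n : ℕ}
    {x v : Fin d → ℤ} (hx : 0 < tfun p n x) (hv : 0 < p v) : 0 < tfun p (n + 1) (x + v) := by
  have hle : tfun p n x * p (x + v - x) ≤ tfun p (n + 1) (x + v) :=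
    single_le_finsum x ((support_tfun_finite hp hfin n).subset fun y => mt fun h => by simp [h])
      fun y => mul_nonneg (tfun_nonneg hp n y) (hp _)
  rw [add_sub_cancel_left] at hle
  exact (mul_pos hx hv).trans_le hle

lemma tfun_add_pos (hp : ∀ v, 0 ≤ p v) (hfin : (support p).Finite) :
    ∀ {a b : ℕ} {x y : Fin d → ℤ}, 0 < tfun p a x → 0 < tfun p b y →
      0 < tfun p (a + b) (x + y)
  | a, 0, x, y, ha, hb => by rwa [tfun_zero_pos_iff.1 hb, add_zero, add_zero]
  | a, b + 1, x, y, ha, hb => by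
    obtain ⟨w, hw, hyw⟩ := exists_pos_of_tfun_succ_pos hp hb
    simpa [add_assoc] using tfun_succ_pos hp hfin (tfun_add_pos hp hfin ha hw) hyw

lemma natCast_eq_of_tfun_pos (hp : ∀ v, 0 ≤ p v) (hfin : (support p).Finite) (hirr : Irred p)
    {r : ℕ} (hr1 : ∀ n : ℕ, 0 < n → 0 < tfun p n 0 → r ∣ n) {x : Fin d → ℤ} {a b : ℕ}
    (ha : 0 < tfun p a x) (hb : 0 < tfun p b x) : (a : ZMod r) = b := by
  obtain ⟨m, hm, hxm⟩ := hirr (-x)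
  have hret : ∀ c, 0 < tfun p c x → ((c + m : ℕ) : ZMod r) = 0 := fun c hc =>
    (ZMod.natCast_eq_zero_iff _ _).2
      (hr1 _ (by omega) (by simpa using tfun_add_pos hp hfin hc hxm))
  have hab := (hret a ha).trans (hret b hb).symm
  push_cast at hab
  exact add_right_cancel hab

lemma exists_addMonoidHom_zmod_eq_one (hp : ∀ v, 0 ≤ p v) (hfin : (support p).Finite)
    (hirr : Irred p) {r : ℕ} (hr1 : ∀ n : ℕ, 0 < n → 0 < tfun p n 0 → r ∣ n) :
    ∃ L : (Fin d → ℤ) →+ ZMod r, ∀ v ∈ support p, L v = 1 := by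
  choose n _ hn using fun x => hirr x
  refine ⟨{ toFun x := n x, map_zero' := ?_, map_add' x y := ?_ }, fun v hv => ?_⟩
  · simpa using natCast_eq_of_tfun_pos hp hfin hirr hr1 (hn 0) (b := 0) (by simp [tfun])
  · simpa using natCast_eq_of_tfun_pos hp hfin hirr hr1 (hn (x + y))
      (tfun_add_pos hp hfin (hn x) (hn y))
  · simpa using natCast_eq_of_tfun_pos hp hfin hirr hr1 (hn v) (b := 1)
      (by rw [tfun_one]; exact (hp v).lt_of_ne' hv)

lemma map_eq_pow_of_tfun_pos {M : Type*} [Monoid M] (hp : ∀ v, 0 ≤ p v)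
    (ψ : AddChar (Fin d → ℤ) M) {w : M} (hψ : ∀ v ∈ support p, ψ v = w) :
    ∀ {n : ℕ} {x : Fin d → ℤ}, 0 < tfun p n x → ψ x = w ^ n
  | 0, x, h => by rw [tfun_zero_pos_iff.1 h, AddChar.map_zero_eq_one, pow_zero]
  | n + 1, x, h => by
    obtain ⟨y, hy, hxy⟩ := exists_pos_of_tfun_succ_pos hp h
    rw [← add_sub_cancel y x, AddChar.map_add_eq_mul, map_eq_pow_of_tfun_pos hp ψ hψ hy,
      hψ _ hxy.ne', pow_succ]

def charOf (θ : E d) : AddChar (Fin d → ℤ) ℂ where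
  toFun x := exp (pairR θ (emb x) * I)
  map_zero_eq_one' := by simp [pairR, emb]
  map_add_eq_mul' x y := by
    rw [← exp_add, ← add_mul]
    simp [pairR, emb, mul_add, Finset.sum_add_distrib]

lemma charOf_apply (θ : E d) (x : Fin d → ℤ) : charOf θ x = exp (pairR θ (emb x) * I) := rfl

lemma charOf_single (θ : E d) (j : Fin d) : charOf θ (Pi.single j 1) = exp (θ j * I) := by
  simp [charOf_apply, pairR, emb, Pi.single_apply]

lemma injOn_charOf :
    Set.InjOn (charOf (d := d)) {θ | ∀ i, θ i ∈ Set.Ico (-Real.pi) Real.pi} := by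
  intro θ₁ h₁ θ₂ h₂ h
  ext i
  refine injOn_exp_mul_I_Ico (h₁ i) (h₂ i) ?_
  simpa only [charOf_single] using congrArg (· (Pi.single i 1)) h

lemma exists_charOf_eq (ψ : AddChar (Fin d → ℤ) ℂ) (hψ : ∀ j, ‖ψ (Pi.single j 1)‖ = 1) :
    ∃ θ : E d, (∀ i, θ i ∈ Set.Ico (-Real.pi) Real.pi) ∧ charOf θ = ψ := by
  choose t ht hexp using fun j => exists_mem_Ico_exp_mul_I_eq (hψ j)
  exact ⟨WithLp.toLp 2 t, ht, addChar_ext_single fun j => (charOf_single _ j).trans (hexp j)⟩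

def charFun (p : (Fin d → ℤ) → ℝ) (θ : E d) : ℂ := kappaC p (fun i => (θ i : ℂ) * I)

lemma charFun_eq_sum (hfin : (support p).Finite) (θ : E d) :
    charFun p θ = ∑ v ∈ hfin.toFinset, p v • charOf θ v := by
  rw [charFun, kappaC, finsum_eq_sum_of_support_subset _ fun v hv => ?_]
  · refine Finset.sum_congr rfl fun v _ => ?_
    rw [charOf_apply, real_smul]
    congr 2
    simp only [pairR, emb]
    push_cast
    rw [Finset.sum_mul]
    exact Finset.sum_congr rfl fun i _ => by ring
  · simp only [Set.Finite.coe_toFinset, mem_support]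
    exact fun hpv => hv (by simp [hpv])

lemma sum_toFinset_eq_one (hfin : (support p).Finite) (hsum : ∑ᶠ v, p v = 1) :
    ∑ v ∈ hfin.toFinset, p v = 1 := by
  rwa [← finsum_eq_sum_of_support_subset _ hfin.coe_toFinset.ge]

lemma charOf_eq_charFun (hp : ∀ v, 0 ≤ p v) (hfin : (support p).Finite) (hsum : ∑ᶠ v, p v = 1)
    {θ : E d} (hθ : ‖charFun p θ‖ = 1) : ∀ v ∈ support p, charOf θ v = charFun p θ := by
  intro v hv
  rw [charFun_eq_sum hfin] at hθ ⊢
  exact eq_sum_of_norm_sum_eq (fun v _ => hp v) (sum_toFinset_eq_one hfin hsum)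
    (fun v _ => (norm_exp_ofReal_mul_I _).le) hθ (hfin.mem_toFinset.2 hv) hv

lemma charFun_pow_eq_one (hp : ∀ v, 0 ≤ p v) (hfin : (support p).Finite) (hsum : ∑ᶠ v, p v = 1)
    {r : ℕ} (hr2 : ∀ m : ℕ, (∀ n : ℕ, 0 < n → 0 < tfun p n 0 → m ∣ n) → m ∣ r) {θ : E d}
    (hθ : ‖charFun p θ‖ = 1) : charFun p θ ^ r = 1 := by
  have hret : ∀ n, 0 < tfun p n 0 → charFun p θ ^ n = 1 := fun n hn => by
    rw [← map_eq_pow_of_tfun_pos hp _ (charOf_eq_charFun hp hfin hsum hθ) hn,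
      AddChar.map_zero_eq_one]
  exact orderOf_dvd_iff_pow_eq_one.1
    (hr2 _ fun n _ hn => orderOf_dvd_of_pow_eq_one (hret n hn))

lemma injOn_charFun_Uset (hp : ∀ v, 0 ≤ p v) (hfin : (support p).Finite)
    (hsum : ∑ᶠ v, p v = 1) (hirr : Irred p) : Set.InjOn (charFun p) (Uset p) := by
  intro θ₁ h₁ θ₂ h₂ h
  refine injOn_charOf h₁.1 h₂.1 (AddChar.ext _ _ fun x => ?_)
  obtain ⟨n, -, hn⟩ := hirr x
  rw [map_eq_pow_of_tfun_pos hp _ (charOf_eq_charFun hp hfin hsum h₁.2) hn,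
    map_eq_pow_of_tfun_pos hp _ (charOf_eq_charFun hp hfin hsum h₂.2) hn, h]

lemma exists_mem_Uset_charFun_eq (hp : ∀ v, 0 ≤ p v) (hfin : (support p).Finite)
    (hsum : ∑ᶠ v, p v = 1) (hirr : Irred p) {r : ℕ} [NeZero r]
    (hr1 : ∀ n : ℕ, 0 < n → 0 < tfun p n 0 → r ∣ n) {w : ℂ} (hw : w ^ r = 1) :
    ∃ θ ∈ Uset p, charFun p θ = w := by
  obtain ⟨L, hL⟩ := exists_addMonoidHom_zmod_eq_one hp hfin hirr hr1
  have hw1 : ‖w‖ = 1 := norm_eq_one_of_pow_eq_one hw (NeZero.ne r)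
  set ψ := (AddChar.zmodChar r hw).compAddMonoidHom L
  have hψ : ∀ x, ‖ψ x‖ = 1 := fun x => by
    simp [ψ, AddChar.zmodChar_apply, hw1]
  have hψV : ∀ v ∈ support p, ψ v = w := fun v hv => by
    simpa [ψ, hL v hv] using AddChar.zmodChar_apply' hw 1
  obtain ⟨θ, hbox, hθψ⟩ := exists_charOf_eq ψ fun j => hψ _
  have hθ : charFun p θ = w := by
    rw [charFun_eq_sum hfin, Finset.sum_congr rfl fun v hv => by
        rw [hθψ, hψV v (hfin.mem_toFinset.1 hv)],
      ← Finset.sum_smul, sum_toFinset_eq_one hfin hsum, one_smul]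
  exact ⟨θ, ⟨hbox, (congrArg norm hθ).trans hw1⟩, hθ⟩

lemma image_charFun_Uset (hp : ∀ v, 0 ≤ p v) (hfin : (support p).Finite)
    (hsum : ∑ᶠ v, p v = 1) (hirr : Irred p) {r : ℕ} [NeZero r]
    (hr1 : ∀ n : ℕ, 0 < n → 0 < tfun p n 0 → r ∣ n)
    (hr2 : ∀ m : ℕ, (∀ n : ℕ, 0 < n → 0 < tfun p n 0 → m ∣ n) → m ∣ r) :
    charFun p '' Uset p = ↑(Polynomial.nthRootsFinset r (1 : ℂ)) := by
  ext w
  rw [Finset.mem_coe, Polynomial.mem_nthRootsFinset (NeZero.pos r)]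
  constructor
  · rintro ⟨θ, hθ, rfl⟩
    exact charFun_pow_eq_one hp hfin hsum hr2 hθ.2
  · exact exists_mem_Uset_charFun_eq hp hfin hsum hirr hr1

lemma period_pos (hirr : Irred p) {r : ℕ} (hr1 : ∀ n : ℕ, 0 < n → 0 < tfun p n 0 → r ∣ n) :
    0 < r := by
  obtain ⟨n, hn, h⟩ := hirr 0
  exact Nat.pos_of_dvd_of_pos (hr1 n hn h) hn

/-- (i) each `θ₀ ∈ U` satisfies `κ(iθ₀) = e^{it}` with `e^{i⟨θ₀,v⟩} = e^{it}` for all `v ∈ V`;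
(ii) `κ(iθ₀)^r = 1`; (iii) `U` has exactly `r` elements.  The period `r` is specified by
the gcd hypotheses `hr1`, `hr2`. -/
theorem statement15 (d : ℕ) (p : (Fin d → ℤ) → ℝ) (hp : ∀ v, 0 ≤ p v)
    (hfin : (Function.support p).Finite) (hsum : ∑ᶠ v, p v = 1) (hirr : Irred p)
    (r : ℕ) (hr1 : ∀ n : ℕ, 0 < n → 0 < tfun p n 0 → r ∣ n)
    (hr2 : ∀ m : ℕ, (∀ n : ℕ, 0 < n → 0 < tfun p n 0 → m ∣ n) → m ∣ r) :
    (∀ θ₀ ∈ Uset p, ∃ t : ℝ, t ∈ Set.Ico (-Real.pi) Real.pi ∧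
      kappaC p (fun i => (θ₀ i : ℂ) * Complex.I) = Complex.exp (t * Complex.I) ∧
      ∀ v ∈ Function.support p,
        Complex.exp ((pairR θ₀ (emb v) : ℂ) * Complex.I) = Complex.exp (t * Complex.I)) ∧
    (∀ θ₀ ∈ Uset p, kappaC p (fun i => (θ₀ i : ℂ) * Complex.I) ^ r = 1) ∧
    ((Uset p).Finite ∧ (Uset p).ncard = r) := by
  have : NeZero r := ⟨(period_pos hirr hr1).ne'⟩
  have hinj := injOn_charFun_Uset hp hfin hsum hirr
  have himage := image_charFun_Uset hp hfin hsum hirr hr1 hr2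
  refine ⟨fun θ hθ => ?_, fun θ hθ => charFun_pow_eq_one hp hfin hsum hr2 hθ.2, ?_, ?_⟩
  · obtain ⟨t, ht, hexp⟩ := exists_mem_Ico_exp_mul_I_eq hθ.2
    exact ⟨t, ht, hexp.symm, fun v hv => hexp ▸ charOf_eq_charFun hp hfin hsum hθ.2 v hv⟩
  · exact Set.Finite.of_finite_image (himage ▸ Finset.finite_toSet _) hinj
  · rw [← hinj.ncard_image, himage, Set.ncard_coe_finset,
      (isPrimitiveRoot_exp r (NeZero.ne r)).card_nthRootsFinset]

end RWalk
end
end
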